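/- Let N be a qubit channel with Pauli transfer matrix M and infidelity r = (4 − Tr M)/6, and suppose r ≤ 1/3. Then for all distinct non-identity Paulis P ≠ Q with P, Q ∈ {X, Y, Z}, the off-diagonal entry satisfies the tightened bound |M_{P,Q}| ≤ √(6r − 9r²). -/

import Mathlib

open Matrix Kronecker
open scoped ComplexOrder

noncomputable def pauli : Fin 4 → Matrix (Fin 2) (Fin 2) ℂ
  | 0 => 1
  | 1 => !![0, 1; 1, 0]
  | 2 => !![0, -Complex.I; Complex.I, 0]
  | 3 => !![1, 0; 0, -1]

/-- The Choi matrix of a linear map on 2×2 complex matrices. -/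
noncomputable def choi (N : Matrix (Fin 2) (Fin 2) ℂ →ₗ[ℂ] Matrix (Fin 2) (Fin 2) ℂ) :
    Matrix (Fin 2 × Fin 2) (Fin 2 × Fin 2) ℂ :=
  ∑ i : Fin 2, ∑ j : Fin 2,
    (Matrix.single i j (1 : ℂ)) ⊗ₖ N (Matrix.single i j (1 : ℂ))

/-- A qubit channel: completely positive (PSD Choi matrix) and trace preserving. -/
def IsQubitChannel (N : Matrix (Fin 2) (Fin 2) ℂ →ₗ[ℂ] Matrix (Fin 2) (Fin 2) ℂ) : Prop :=
  (choi N).PosSemidef ∧ ∀ A, (N A).trace = A.trace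

/-- The Pauli transfer matrix: M_{P,Q} = Tr(P N(Q))/2. -/
noncomputable def ptm (N : Matrix (Fin 2) (Fin 2) ℂ →ₗ[ℂ] Matrix (Fin 2) (Fin 2) ℂ) :
    Matrix (Fin 4) (Fin 4) ℝ :=
  Matrix.of fun p q => ((pauli p * N (pauli q)).trace / 2).re

/-- The average gate infidelity, r(N) = (4 - Tr M)/6. -/
noncomputable def infid (N : Matrix (Fin 2) (Fin 2) ℂ →ₗ[ℂ] Matrix (Fin 2) (Fin 2) ℂ) : ℝ :=
  (4 - (ptm N).trace) / 6

/- ============ auxiliary material ============ -/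

lemma re_div_two (z : ℂ) : (z / 2).re = z.re / 2 := by
  simp [Complex.div_re, Complex.normSq]

lemma choi_apply (N : Matrix (Fin 2) (Fin 2) ℂ →ₗ[ℂ] Matrix (Fin 2) (Fin 2) ℂ)
    (i k j l : Fin 2) : choi N (i,k) (j,l) = N (Matrix.single i j 1) k l := by
  fin_cases i <;> fin_cases j <;>
    simp [choi, Fin.sum_univ_two, Matrix.sum_apply, Matrix.kroneckerMap_apply,
      Matrix.single, Matrix.of_apply]

lemma choi_apply' (N : Matrix (Fin 2) (Fin 2) ℂ →ₗ[ℂ] Matrix (Fin 2) (Fin 2) ℂ)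
    (a b : Fin 2 × Fin 2) : choi N a b = N (Matrix.single a.1 b.1 1) a.2 b.2 := by
  obtain ⟨i, k⟩ := a; obtain ⟨j, l⟩ := b; exact choi_apply N i k j l

/-- the vectors vec(P) for the four Paulis -/
noncomputable def wvec (n : Fin 4) : Fin 2 × Fin 2 → ℂ := fun p => pauli n p.2 p.1

/-- Cauchy–Schwarz for the real part of a PSD sesquilinear form. -/
lemma psd_re_cs {n : Type*} [Fintype n] {M : Matrix n n ℂ} (hM : M.PosSemidef) (x y : n → ℂ) :
    ((star x ⬝ᵥ M *ᵥ y).re)^2 ≤ (star x ⬝ᵥ M *ᵥ x).re * (star y ⬝ᵥ M *ᵥ y).re := by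
  have hyx : star y ⬝ᵥ M *ᵥ x = star (star x ⬝ᵥ M *ᵥ y) := by
    conv_lhs => rw [← hM.1]
    rw [mulVec_conjTranspose, star_dotProduct_star, dotProduct_mulVec]
  have key : ∀ t : ℝ, 0 ≤ (star x ⬝ᵥ M *ᵥ x).re * (t*t)
      + (2*(star x ⬝ᵥ M *ᵥ y).re) * t + (star y ⬝ᵥ M *ᵥ y).re := by
    intro t
    have h0 := hM.dotProduct_mulVec_nonneg ((t:ℂ) • x + y)
    have expand : star ((t:ℂ) • x + y) ⬝ᵥ M *ᵥ ((t:ℂ) • x + y)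
        = (t:ℂ)*(t:ℂ)*(star x ⬝ᵥ M *ᵥ x)
          + (t:ℂ)*((star x ⬝ᵥ M *ᵥ y) + (star y ⬝ᵥ M *ᵥ x)) + star y ⬝ᵥ M *ᵥ y := by
      simp only [star_add, star_smul, mulVec_add, mulVec_smul, dotProduct_add,
        add_dotProduct, dotProduct_smul, smul_dotProduct, smul_eq_mul,
        Complex.star_def, Complex.conj_ofReal]
      ring
    rw [expand, hyx] at h0
    have h1 := (Complex.le_def.mp h0).1
    simp only [Complex.zero_re, Complex.add_re, Complex.mul_re, Complex.ofReal_re,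
      Complex.ofReal_im, Complex.add_im, Complex.mul_im, Complex.star_def,
      Complex.conj_re, Complex.conj_im] at h1
    nlinarith [h1]
  have hd := discrim_le_zero key
  rw [discrim] at hd
  nlinarith [hd]

/-- Cauchy–Schwarz for the imaginary part of a PSD sesquilinear form. -/
lemma psd_im_cs {n : Type*} [Fintype n] {M : Matrix n n ℂ} (hM : M.PosSemidef) (x y : n → ℂ) :
    ((star x ⬝ᵥ M *ᵥ y).im)^2 ≤ (star x ⬝ᵥ M *ᵥ x).re * (star y ⬝ᵥ M *ᵥ y).re := by
  have h := psd_re_cs hM x (Complex.I • y)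
  have hxy : star x ⬝ᵥ M *ᵥ (Complex.I • y) = Complex.I * (star x ⬝ᵥ M *ᵥ y) := by
    rw [mulVec_smul, dotProduct_smul, smul_eq_mul]
  have hyy : star (Complex.I • y) ⬝ᵥ M *ᵥ (Complex.I • y) = star y ⬝ᵥ M *ᵥ y := by
    rw [mulVec_smul, dotProduct_smul, star_smul, smul_dotProduct, smul_smul]
    simp [Complex.star_def, Complex.conj_I, Complex.I_mul_I]
  rw [hxy, hyy, Complex.mul_re] at h
  simp only [Complex.I_re, Complex.I_im] at h
  nlinarith [h]

/-- the purely real inequality at the heart of the bound -/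
lemma key_ineq (m mp a b c σ : ℝ) (ha : 0 ≤ a) (hb : 0 ≤ b) (hc : 0 ≤ c)
    (hσ2 : σ ≤ 2) (hsum : a + b + c = σ)
    (h1 : (m + mp)^2 ≤ a*b) (h2 : (m - mp)^2 ≤ (4 - σ)*c) :
    |m| ≤ Real.sqrt (σ*(4-σ)/4) := by
  have hσ0 : 0 ≤ σ := by linarith
  have hcσ : c ≤ σ := by linarith
  have h1' : |m + mp| ≤ (σ - c)/2 := by
    have hs : (m+mp)^2 ≤ ((σ-c)/2)^2 := by nlinarith [sq_nonneg (a-b)]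
    have h0 : (0:ℝ) ≤ (σ-c)/2 := by linarith
    rw [← Real.sqrt_sq_eq_abs]
    calc Real.sqrt ((m+mp)^2) ≤ Real.sqrt (((σ-c)/2)^2) := Real.sqrt_le_sqrt hs
      _ = (σ-c)/2 := Real.sqrt_sq h0
  have h2' : |m - mp| ≤ Real.sqrt (4-σ) * Real.sqrt c := by
    rw [← Real.sqrt_sq_eq_abs, ← Real.sqrt_mul (by linarith : (0:ℝ) ≤ 4-σ) c]
    exact Real.sqrt_le_sqrt h2
  set x := Real.sqrt σ with hxdef
  set y := Real.sqrt c with hydef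
  set k := Real.sqrt (4-σ) with hkdef
  have hx2 : x^2 = σ := Real.sq_sqrt hσ0
  have hy2 : y^2 = c := Real.sq_sqrt hc
  have hk2 : k^2 = 4-σ := Real.sq_sqrt (by linarith)
  have hyx : y ≤ x := Real.sqrt_le_sqrt hcσ
  have hxk : x ≤ k := Real.sqrt_le_sqrt (by linarith)
  have hy0 : 0 ≤ y := Real.sqrt_nonneg _
  have hx0 : 0 ≤ x := Real.sqrt_nonneg _
  have hk0 : 0 ≤ k := Real.sqrt_nonneg _
  have main : (σ-c)/2 + k*y ≤ x*k := by
    nlinarith [mul_nonneg (sub_nonneg.2 hyx) (by linarith : (0:ℝ) ≤ 2*k - x - y)]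
  have h2m : 2*|m| ≤ (σ-c)/2 + k*y := by
    have : 2*|m| = |(m+mp)+(m-mp)| := by rw [show (m+mp)+(m-mp) = 2*m by ring, abs_mul]; simp
    rw [this]
    calc |(m+mp)+(m-mp)| ≤ |m+mp| + |m-mp| := abs_add_le _ _
      _ ≤ (σ-c)/2 + k*y := by linarith
  have hgoal : Real.sqrt (σ*(4-σ)/4) = x*k/2 := by
    rw [show σ*(4-σ)/4 = (x*k/2)^2 by rw [div_pow, mul_pow, hx2, hk2]; ring]
    exact Real.sqrt_sq (by positivity)
  rw [hgoal]; linarith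

set_option maxHeartbeats 2000000 in
/-- For a qubit channel with infidelity r ≤ 1/3, the off-diagonal entries of
the unital block of the Pauli transfer matrix satisfy the tightened bound
|M_{P,Q}| ≤ √(6r - 9r²) for all distinct non-identity Paulis P ≠ Q. -/
theorem offdiagonal_entry_bound_tight
    (N : Matrix (Fin 2) (Fin 2) ℂ →ₗ[ℂ] Matrix (Fin 2) (Fin 2) ℂ)
    (hN : IsQubitChannel N) (hr : infid N ≤ 1 / 3)
    (p q : Fin 4) (hp : p ≠ 0) (hq : q ≠ 0) (hpq : p ≠ q) :
    |ptm N p q| ≤ Real.sqrt (6 * infid N - 9 * infid N ^ 2) := by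
  obtain ⟨hpos, htp⟩ := hN
  -- Pauli decompositions into standard basis matrices
  have e0 : N (pauli 0) = N (Matrix.single 0 0 1) + N (Matrix.single 1 1 1) := by
    rw [← map_add]; congr 1
    ext i j; fin_cases i <;> fin_cases j <;>
      simp [pauli, Matrix.single, Matrix.one_apply]
  have e1 : N (pauli 1) = N (Matrix.single 0 1 1) + N (Matrix.single 1 0 1) := by
    rw [← map_add]; congr 1
    ext i j; fin_cases i <;> fin_cases j <;> simp [pauli, Matrix.single]
  have e2 : N (pauli 2) = (-Complex.I) • N (Matrix.single 0 1 1)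
      + Complex.I • N (Matrix.single 1 0 1) := by
    rw [← _root_.map_smul, ← _root_.map_smul, ← map_add]; congr 1
    ext i j; fin_cases i <;> fin_cases j <;> simp [pauli, Matrix.single]
  have e3 : N (pauli 3) = N (Matrix.single 0 0 1) - N (Matrix.single 1 1 1) := by
    rw [← map_sub]; congr 1
    ext i j; fin_cases i <;> fin_cases j <;> simp [pauli, Matrix.single]
  -- hermiticity of the Choi matrix, entrywise
  have herm : ∀ i j k l : Fin 2,
      N (Matrix.single j i 1) l k = (starRingEnd ℂ) (N (Matrix.single i j 1) k l) := by
    intro i j k l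
    have h := congrFun (congrFun hpos.1.eq (j,l)) (i,k)
    rw [Matrix.conjTranspose_apply, choi_apply, choi_apply] at h
    rw [starRingEnd_apply]; exact h.symm
  have h10 : ∀ k l : Fin 2, N (Matrix.single 1 0 1) k l
      = (starRingEnd ℂ) (N (Matrix.single 0 1 1) l k) := fun k l => herm 0 1 l k
  have h00 : N (Matrix.single 0 0 1) 1 0
      = (starRingEnd ℂ) (N (Matrix.single 0 0 1) 0 1) := herm 0 0 0 1
  have h00d : ∀ k, (N (Matrix.single 0 0 1) k k).im = 0 := fun k =>
    Complex.conj_eq_iff_im.mp (herm 0 0 k k).symm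
  have h11 : N (Matrix.single 1 1 1) 1 0
      = (starRingEnd ℂ) (N (Matrix.single 1 1 1) 0 1) := herm 1 1 0 1
  have h11d : ∀ k, (N (Matrix.single 1 1 1) k k).im = 0 := fun k =>
    Complex.conj_eq_iff_im.mp (herm 1 1 k k).symm
  -- trace preservation, entrywise
  have T00 : (N (Matrix.single 0 0 1)).trace = 1 := by
    rw [htp]; simp [Matrix.trace_fin_two, Matrix.single]
  have T01 : (N (Matrix.single 0 1 1)).trace = 0 := by
    rw [htp]; simp [Matrix.trace_fin_two, Matrix.single]
  have T11 : (N (Matrix.single 1 1 1)).trace = 1 := by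
    rw [htp]; simp [Matrix.trace_fin_two, Matrix.single]
  have s00 : N (Matrix.single 0 0 1) 1 1 = 1 - N (Matrix.single 0 0 1) 0 0 := by
    have h := T00; rw [Matrix.trace_fin_two] at h; linear_combination h
  have s01 : N (Matrix.single 0 1 1) 1 1 = -N (Matrix.single 0 1 1) 0 0 := by
    have h := T01; rw [Matrix.trace_fin_two] at h; linear_combination h
  have s11 : N (Matrix.single 1 1 1) 1 1 = 1 - N (Matrix.single 1 1 1) 0 0 := by
    have h := T11; rw [Matrix.trace_fin_two] at h; linear_combination h
  -- the diagonal quadratic-form values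
  have cI : (star (wvec 0) ⬝ᵥ choi N *ᵥ wvec 0).re
      = ptm N 0 0 + ptm N 1 1 + ptm N 2 2 + ptm N 3 3 := by
    simp only [ptm, Matrix.of_apply, e0, e1, e2, e3]
    simp [wvec, dotProduct, Matrix.mulVec, Fintype.sum_prod_type, Fin.sum_univ_two,
      choi_apply', Prod.fst_zero, Prod.snd_zero, Prod.fst_one, Prod.snd_one, pauli, Matrix.trace_fin_two, Matrix.mul_apply,
      Matrix.add_apply, Matrix.sub_apply, Matrix.smul_apply, Matrix.neg_apply, Matrix.vecMul,
      smul_eq_mul, re_div_two, Complex.neg_re, Complex.neg_im, Complex.sub_re, Complex.sub_im,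
      h10, h00, h00d, h11, h11d, s00, s01, s11,
      Complex.add_re, Complex.mul_re, Complex.add_im, Complex.mul_im]
    ring
  have cX : (star (wvec 1) ⬝ᵥ choi N *ᵥ wvec 1).re
      = ptm N 0 0 + ptm N 1 1 - ptm N 2 2 - ptm N 3 3 := by
    simp only [ptm, Matrix.of_apply, e0, e1, e2, e3]
    simp [wvec, dotProduct, Matrix.mulVec, Fintype.sum_prod_type, Fin.sum_univ_two,
      choi_apply', Prod.fst_zero, Prod.snd_zero, Prod.fst_one, Prod.snd_one, pauli, Matrix.trace_fin_two, Matrix.mul_apply,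
      Matrix.add_apply, Matrix.sub_apply, Matrix.smul_apply, Matrix.neg_apply, Matrix.vecMul,
      smul_eq_mul, re_div_two, Complex.neg_re, Complex.neg_im, Complex.sub_re, Complex.sub_im,
      h10, h00, h00d, h11, h11d, s00, s01, s11,
      Complex.add_re, Complex.mul_re, Complex.add_im, Complex.mul_im]
    ring
  have cY : (star (wvec 2) ⬝ᵥ choi N *ᵥ wvec 2).re
      = ptm N 0 0 - ptm N 1 1 + ptm N 2 2 - ptm N 3 3 := by
    simp only [ptm, Matrix.of_apply, e0, e1, e2, e3]
    simp [wvec, dotProduct, Matrix.mulVec, Fintype.sum_prod_type, Fin.sum_univ_two,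
      choi_apply', Prod.fst_zero, Prod.snd_zero, Prod.fst_one, Prod.snd_one, pauli, Matrix.trace_fin_two, Matrix.mul_apply,
      Matrix.add_apply, Matrix.sub_apply, Matrix.smul_apply, Matrix.neg_apply, Matrix.vecMul,
      smul_eq_mul, re_div_two, Complex.neg_re, Complex.neg_im, Complex.sub_re, Complex.sub_im,
      h10, h00, h00d, h11, h11d, s00, s01, s11,
      Complex.add_re, Complex.mul_re, Complex.add_im, Complex.mul_im]
    ring
  have cZ : (star (wvec 3) ⬝ᵥ choi N *ᵥ wvec 3).re
      = ptm N 0 0 - ptm N 1 1 - ptm N 2 2 + ptm N 3 3 := by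
    simp only [ptm, Matrix.of_apply, e0, e1, e2, e3]
    simp [wvec, dotProduct, Matrix.mulVec, Fintype.sum_prod_type, Fin.sum_univ_two,
      choi_apply', Prod.fst_zero, Prod.snd_zero, Prod.fst_one, Prod.snd_one, pauli, Matrix.trace_fin_two, Matrix.mul_apply,
      Matrix.add_apply, Matrix.sub_apply, Matrix.smul_apply, Matrix.neg_apply, Matrix.vecMul,
      smul_eq_mul, re_div_two, Complex.neg_re, Complex.neg_im, Complex.sub_re, Complex.sub_im,
      h10, h00, h00d, h11, h11d, s00, s01, s11,
      Complex.add_re, Complex.mul_re, Complex.add_im, Complex.mul_im]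
    ring
  -- off-diagonal real parts
  have f12 : (star (wvec 1) ⬝ᵥ choi N *ᵥ wvec 2).re = ptm N 1 2 + ptm N 2 1 := by
    simp only [ptm, Matrix.of_apply, e1, e2]
    simp [wvec, dotProduct, Matrix.mulVec, Fintype.sum_prod_type, Fin.sum_univ_two,
      choi_apply', Prod.fst_zero, Prod.snd_zero, Prod.fst_one, Prod.snd_one, pauli, Matrix.trace_fin_two, Matrix.mul_apply,
      Matrix.add_apply, Matrix.sub_apply, Matrix.smul_apply, Matrix.neg_apply, Matrix.vecMul,
      smul_eq_mul, re_div_two, Complex.neg_re, Complex.neg_im, Complex.sub_re, Complex.sub_im,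
      h10, h00, h00d, h11, h11d, s00, s01, s11,
      Complex.add_re, Complex.mul_re, Complex.add_im, Complex.mul_im]
    ring
  have f13 : (star (wvec 1) ⬝ᵥ choi N *ᵥ wvec 3).re = ptm N 1 3 + ptm N 3 1 := by
    simp only [ptm, Matrix.of_apply, e1, e3]
    simp [wvec, dotProduct, Matrix.mulVec, Fintype.sum_prod_type, Fin.sum_univ_two,
      choi_apply', Prod.fst_zero, Prod.snd_zero, Prod.fst_one, Prod.snd_one, pauli, Matrix.trace_fin_two, Matrix.mul_apply,
      Matrix.add_apply, Matrix.sub_apply, Matrix.smul_apply, Matrix.neg_apply, Matrix.vecMul,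
      smul_eq_mul, re_div_two, Complex.neg_re, Complex.neg_im, Complex.sub_re, Complex.sub_im,
      h10, h00, h00d, h11, h11d, s00, s01, s11,
      Complex.add_re, Complex.mul_re, Complex.add_im, Complex.mul_im]
    ring
  have f23 : (star (wvec 2) ⬝ᵥ choi N *ᵥ wvec 3).re = ptm N 2 3 + ptm N 3 2 := by
    simp only [ptm, Matrix.of_apply, e2, e3]
    simp [wvec, dotProduct, Matrix.mulVec, Fintype.sum_prod_type, Fin.sum_univ_two,
      choi_apply', Prod.fst_zero, Prod.snd_zero, Prod.fst_one, Prod.snd_one, pauli, Matrix.trace_fin_two, Matrix.mul_apply,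
      Matrix.add_apply, Matrix.sub_apply, Matrix.smul_apply, Matrix.neg_apply, Matrix.vecMul,
      smul_eq_mul, re_div_two, Complex.neg_re, Complex.neg_im, Complex.sub_re, Complex.sub_im,
      h10, h00, h00d, h11, h11d, s00, s01, s11,
      Complex.add_re, Complex.mul_re, Complex.add_im, Complex.mul_im]
    ring
  -- off-diagonal imaginary parts
  have g3 : (star (wvec 0) ⬝ᵥ choi N *ᵥ wvec 3).im = ptm N 2 1 - ptm N 1 2 := by
    simp only [ptm, Matrix.of_apply, e1, e2]
    simp [wvec, dotProduct, Matrix.mulVec, Fintype.sum_prod_type, Fin.sum_univ_two,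
      choi_apply', Prod.fst_zero, Prod.snd_zero, Prod.fst_one, Prod.snd_one, pauli, Matrix.trace_fin_two, Matrix.mul_apply,
      Matrix.add_apply, Matrix.sub_apply, Matrix.smul_apply, Matrix.neg_apply, Matrix.vecMul,
      smul_eq_mul, re_div_two, Complex.neg_re, Complex.neg_im, Complex.sub_re, Complex.sub_im,
      h10, h00, h00d, h11, h11d, s00, s01, s11,
      Complex.add_re, Complex.mul_re, Complex.add_im, Complex.mul_im]
    ring
  have g2 : (star (wvec 0) ⬝ᵥ choi N *ᵥ wvec 2).im = ptm N 1 3 - ptm N 3 1 := by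
    simp only [ptm, Matrix.of_apply, e1, e3]
    simp [wvec, dotProduct, Matrix.mulVec, Fintype.sum_prod_type, Fin.sum_univ_two,
      choi_apply', Prod.fst_zero, Prod.snd_zero, Prod.fst_one, Prod.snd_one, pauli, Matrix.trace_fin_two, Matrix.mul_apply,
      Matrix.add_apply, Matrix.sub_apply, Matrix.smul_apply, Matrix.neg_apply, Matrix.vecMul,
      smul_eq_mul, re_div_two, Complex.neg_re, Complex.neg_im, Complex.sub_re, Complex.sub_im,
      h10, h00, h00d, h11, h11d, s00, s01, s11,
      Complex.add_re, Complex.mul_re, Complex.add_im, Complex.mul_im]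
    ring
  have g1 : (star (wvec 0) ⬝ᵥ choi N *ᵥ wvec 1).im = ptm N 3 2 - ptm N 2 3 := by
    simp only [ptm, Matrix.of_apply, e2, e3]
    simp [wvec, dotProduct, Matrix.mulVec, Fintype.sum_prod_type, Fin.sum_univ_two,
      choi_apply', Prod.fst_zero, Prod.snd_zero, Prod.fst_one, Prod.snd_one, pauli, Matrix.trace_fin_two, Matrix.mul_apply,
      Matrix.add_apply, Matrix.sub_apply, Matrix.smul_apply, Matrix.neg_apply, Matrix.vecMul,
      smul_eq_mul, re_div_two, Complex.neg_re, Complex.neg_im, Complex.sub_re, Complex.sub_im,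
      h10, h00, h00d, h11, h11d, s00, s01, s11,
      Complex.add_re, Complex.mul_re, Complex.add_im, Complex.mul_im]
    ring
  -- M00 = 1
  have hM00 : ptm N 0 0 = 1 := by
    simp only [ptm, Matrix.of_apply]
    have : (N (pauli 0)).trace = 2 := by
      rw [htp]; simp [pauli, Matrix.trace_fin_two, Matrix.one_apply]
    rw [show pauli 0 * N (pauli 0) = N (pauli 0) by rw [show pauli 0 = 1 from rfl, one_mul],
      this]
    norm_num
  -- nonnegativity of diagonal quadratic forms
  have nn : ∀ n : Fin 4, 0 ≤ (star (wvec n) ⬝ᵥ choi N *ᵥ wvec n).re := by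
    intro n
    have h := hpos.dotProduct_mulVec_nonneg (wvec n)
    simpa using (Complex.le_def.mp h).1
  -- infidelity relation
  have htr : (ptm N).trace = ptm N 0 0 + ptm N 1 1 + ptm N 2 2 + ptm N 3 3 := by
    simp [Matrix.trace, Fin.sum_univ_four, Matrix.diag]
  set r := infid N with hrd
  have hrtr : (ptm N).trace = 4 - 6 * r := by
    rw [hrd]; simp only [infid]; ring
  have hrtr' : ptm N 1 1 + ptm N 2 2 + ptm N 3 3 = 3 - 6 * r := by
    have h := hrtr; rw [htr, hM00] at h; linarith
  have hsum : (star (wvec 1) ⬝ᵥ choi N *ᵥ wvec 1).re + (star (wvec 2) ⬝ᵥ choi N *ᵥ wvec 2).re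
      + (star (wvec 3) ⬝ᵥ choi N *ᵥ wvec 3).re = 6 * r := by
    rw [cX, cY, cZ, hM00]; linarith
  have hc0 : (star (wvec 0) ⬝ᵥ choi N *ᵥ wvec 0).re = 4 - 6 * r := by
    rw [cI, hM00]; linarith
  have hσ2 : 6 * r ≤ 2 := by linarith
  -- the final assembly, for arbitrary data
  have final : ∀ m mp a b c : ℝ, 0 ≤ a → 0 ≤ b → 0 ≤ c →
      a + b + c = 6 * r → (m+mp)^2 ≤ a*b → (m-mp)^2 ≤ (4 - 6*r)*c →
      |m| ≤ Real.sqrt (6 * r - 9 * r^2) := by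
    intro m mp a b c ha hb hc hs h1 h2
    have := key_ineq m mp a b c (6*r) ha hb hc hσ2 hs h1
      (by rw [show (4:ℝ) - 6*r = 4 - 6*r by ring]; exact h2)
    rwa [show (6*r)*(4-(6*r))/4 = 6*r - 9*r^2 by ring] at this
  fin_cases p <;> fin_cases q
  any_goals exact absurd rfl hp
  any_goals exact absurd rfl hq
  any_goals exact absurd rfl hpq
  -- six remaining goals: (1,2),(1,3),(2,1),(2,3),(3,1),(3,2)
  · -- (1,2)
    refine final (ptm N 1 2) (ptm N 2 1) _ _ _ (nn 1) (nn 2) (nn 3) hsum ?_ ?_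
    · rw [← f12]; exact psd_re_cs hpos (wvec 1) (wvec 2)
    · rw [← hc0]
      have h := psd_im_cs hpos (wvec 0) (wvec 3)
      rw [g3] at h
      calc (ptm N 1 2 - ptm N 2 1)^2 = (ptm N 2 1 - ptm N 1 2)^2 := by ring
        _ ≤ _ := h
  · -- (1,3)
    refine final (ptm N 1 3) (ptm N 3 1) _ _ _ (nn 1) (nn 3) (nn 2)
      (by linarith [hsum]) ?_ ?_
    · rw [← f13]; exact psd_re_cs hpos (wvec 1) (wvec 3)
    · rw [← hc0]
      have h := psd_im_cs hpos (wvec 0) (wvec 2)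
      rw [g2] at h
      exact h
  · -- (2,1)
    refine final (ptm N 2 1) (ptm N 1 2) _ _ _ (nn 1) (nn 2) (nn 3) hsum ?_ ?_
    · rw [show ptm N 2 1 + ptm N 1 2 = ptm N 1 2 + ptm N 2 1 by ring, ← f12]
      exact psd_re_cs hpos (wvec 1) (wvec 2)
    · rw [← hc0]
      have h := psd_im_cs hpos (wvec 0) (wvec 3)
      rw [g3] at h
      exact h
  · -- (2,3)
    refine final (ptm N 2 3) (ptm N 3 2) _ _ _ (nn 2) (nn 3) (nn 1)
      (by linarith [hsum]) ?_ ?_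
    · rw [← f23]; exact psd_re_cs hpos (wvec 2) (wvec 3)
    · rw [← hc0]
      have h := psd_im_cs hpos (wvec 0) (wvec 1)
      rw [g1] at h
      calc (ptm N 2 3 - ptm N 3 2)^2 = (ptm N 3 2 - ptm N 2 3)^2 := by ring
        _ ≤ _ := h
  · -- (3,1)
    refine final (ptm N 3 1) (ptm N 1 3) _ _ _ (nn 1) (nn 3) (nn 2)
      (by linarith [hsum]) ?_ ?_
    · rw [show ptm N 3 1 + ptm N 1 3 = ptm N 1 3 + ptm N 3 1 by ring, ← f13]
      exact psd_re_cs hpos (wvec 1) (wvec 3)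
    · rw [← hc0]
      have h := psd_im_cs hpos (wvec 0) (wvec 2)
      rw [g2] at h
      calc (ptm N 3 1 - ptm N 1 3)^2 = (ptm N 1 3 - ptm N 3 1)^2 := by ring
        _ ≤ _ := h
  · -- (3,2)
    refine final (ptm N 3 2) (ptm N 2 3) _ _ _ (nn 2) (nn 3) (nn 1)
      (by linarith [hsum]) ?_ ?_
    · rw [show ptm N 3 2 + ptm N 2 3 = ptm N 2 3 + ptm N 3 2 by ring, ← f23]
      exact psd_re_cs hpos (wvec 2) (wvec 3)
    · rw [← hc0]
      have h := psd_im_cs hpos (wvec 0) (wvec 1)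
      rw [g1] at h
      exact h
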